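/- Let G be a finite simple graph on n ≥ 2 vertices with eigenvalues λ_1(G) ≥ … ≥ λ_n(G), let v be a vertex of G, and let G−v be the induced subgraph obtained by deleting v, with eigenvalues λ_1(G−v) ≥ … ≥ λ_{n−1}(G−v). Then s^+(G) ≥ λ_1(G)² + s^+(G−v) − λ_1(G−v)². -/

import Mathlib

/-!
By Cauchy interlacing, `λᵢ(G - v) ≤ λᵢ(G)` for `1 ≤ i ≤ n - 1`; in counting form (for every `t`,
at most as many eigenvalues of `G - v` as of `G` exceed `t`) this is a dimension argument of
min–max type. Since `s⁺ = ∑ posSq λᵢ` with `posSq` monotone and nonnegative, dropping `λₙ(G)` and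
comparing termwise gives `s⁺(G) - s⁺(G - v) ≥ posSq λ₁(G) - posSq λ₁(G - v)`, which is at least
`λ₁(G)² - λ₁(G - v)²` because `λ₁(G - v) ≤ λ₁(G)`.
-/

open Matrix

variable {V : Type*}

/-- The real adjacency matrix of a simple graph is Hermitian. -/
lemma adjMatrix_isHermitian [Fintype V] [DecidableEq V] (G : SimpleGraph V)
    [DecidableRel G.Adj] : (G.adjMatrix ℝ).IsHermitian := by
  rw [Matrix.IsHermitian, Matrix.conjTranspose_eq_transpose_of_trivial]
  exact G.isSymm_adjMatrix

/-- The eigenvalues of the adjacency matrix of `G`, as a function indexed by the vertices. -/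
noncomputable def adjEigenvalues [Fintype V] [DecidableEq V] (G : SimpleGraph V) : V → ℝ :=
  letI := Classical.decRel G.Adj
  (adjMatrix_isHermitian G).eigenvalues

/-- The energy of a graph: the sum of the absolute values of its eigenvalues. -/
noncomputable def graphEnergy [Fintype V] [DecidableEq V] (G : SimpleGraph V) : ℝ :=
  ∑ i, |adjEigenvalues G i|

/-- The positive square energy `s⁺(G)`: the sum of squares of the positive eigenvalues. -/
noncomputable def sPlus [Fintype V] [DecidableEq V] (G : SimpleGraph V) : ℝ :=
  ∑ i, if 0 < adjEigenvalues G i then (adjEigenvalues G i) ^ 2 else 0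

/-- The negative square energy `s⁻(G)`: the sum of squares of the negative eigenvalues. -/
noncomputable def sMinus [Fintype V] [DecidableEq V] (G : SimpleGraph V) : ℝ :=
  ∑ i, if adjEigenvalues G i < 0 then (adjEigenvalues G i) ^ 2 else 0

/-- The largest adjacency eigenvalue `λ₁(G)` (for a graph with a nonempty vertex set). -/
noncomputable def maxEig [Fintype V] [DecidableEq V] (G : SimpleGraph V) : ℝ :=
  ⨆ i, adjEigenvalues G i

/-- The smallest adjacency eigenvalue `λₙ(G)` (for a graph with a nonempty vertex set). -/
noncomputable def minEig [Fintype V] [DecidableEq V] (G : SimpleGraph V) : ℝ :=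
  ⨅ i, adjEigenvalues G i

open Finset

noncomputable def posSq (x : ℝ) : ℝ := if 0 < x then x ^ 2 else 0

lemma posSq_nonneg (x : ℝ) : 0 ≤ posSq x := by
  unfold posSq; split_ifs <;> positivity

lemma posSq_monotone : Monotone posSq := by
  intro x y hxy
  unfold posSq
  split_ifs with hx hy hy
  · nlinarith
  · linarith
  · positivity
  · rfl

lemma sq_sub_sq_le_posSq_sub_posSq {x y : ℝ} (hyx : y ≤ x) :
    x ^ 2 - y ^ 2 ≤ posSq x - posSq y := by
  unfold posSq
  split_ifs with hx hy hy <;> nlinarith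

lemma sq_add_sum_posSq_sub_sq_le {ι κ : Type*} [Fintype ι] [Fintype κ] {a : κ → ℝ} {b : ι → ℝ}
    {σ : ι → κ} (hσ : Function.Injective σ) (hab : ∀ i, b i ≤ a (σ i)) (i₀ : ι) :
    a (σ i₀) ^ 2 + ∑ i, posSq (b i) - b i₀ ^ 2 ≤ ∑ k, posSq (a k) := by
  have hgap : ∀ i, 0 ≤ posSq (a (σ i)) - posSq (b i) := fun i =>
    sub_nonneg.mpr (posSq_monotone (hab i))
  calc a (σ i₀) ^ 2 + ∑ i, posSq (b i) - b i₀ ^ 2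
      ≤ ∑ i, (posSq (a (σ i)) - posSq (b i)) + ∑ i, posSq (b i) := by
        rw [add_sub_right_comm]
        gcongr
        exact (sq_sub_sq_le_posSq_sub_posSq (hab i₀)).trans
          (single_le_sum (fun i _ => hgap i) (mem_univ i₀))
    _ = ∑ k ∈ univ.map ⟨σ, hσ⟩, posSq (a k) := by simp
    _ ≤ ∑ k, posSq (a k) := sum_le_univ_sum_of_nonneg fun k => posSq_nonneg _

lemma le_castLE_of_forall_card_lt_le {m n : ℕ} {a : Fin n → ℝ} {b : Fin m → ℝ}
    (ha : Antitone a) (hb : Antitone b) (hmn : m ≤ n)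
    (hcard : ∀ t, #{j | t < b j} ≤ #{k | t < a k}) (i : Fin m) :
    b i ≤ a (Fin.castLE hmn i) := by
  by_contra! hlt
  set i' := Fin.castLE hmn i
  -- the `i + 1` largest entries of `b` exceed `a i'`, but only `i` entries of `a` do
  have hb_gt : Iic i ⊆ ({j | a i' < b j} : Finset _) := fun j hj => by
    simpa using hlt.trans_le (hb (mem_Iic.mp hj))
  have ha_gt : ({k | a i' < a k} : Finset _) ⊆ Iio i' := fun k hk => by
    simp only [mem_filter, mem_univ, true_and] at hk
    exact mem_Iio.mpr (lt_of_not_ge fun hle => (ha hle).not_gt hk)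
  have := (card_le_card hb_gt).trans ((hcard _).trans (card_le_card ha_gt))
  simp only [Fin.card_Iic, Fin.card_Iio, i', Fin.val_castLE] at this
  omega

section DiagonalForm

variable {n ι κ : Type*} [Fintype n] [DecidableEq ι] [DecidableEq κ]

/-- For `A = 1` this says that `w` is orthonormal. -/
def IsDiagonalForm (A : Matrix n n ℝ) (w : ι → n → ℝ) (ρ : ι → ℝ) : Prop :=
  ∀ i j, w i ⬝ᵥ (A *ᵥ w j) = if i = j then ρ i else 0

namespace IsDiagonalForm

variable {A : Matrix n n ℝ} {w : ι → n → ℝ} {ρ : ι → ℝ}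

lemma comp (h : IsDiagonalForm A w ρ) {g : κ → ι} (hg : Function.Injective g) :
    IsDiagonalForm A (w ∘ g) (ρ ∘ g) := fun i j => by
  simp [h (g i) (g j), hg.eq_iff]

lemma sum_smul_dotProduct_mulVec [Fintype ι] (h : IsDiagonalForm A w ρ) (c : ι → ℝ) :
    (∑ i, c i • w i) ⬝ᵥ (A *ᵥ ∑ i, c i • w i) = ∑ i, ρ i * c i ^ 2 := by
  unfold IsDiagonalForm at h
  simp only [mulVec_sum, mulVec_smul, sum_dotProduct, dotProduct_sum, smul_dotProduct,
    dotProduct_smul, h, smul_eq_mul, mul_ite, mul_zero, sum_ite_eq', mem_univ, if_true]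
  exact sum_congr rfl fun i _ => by ring

variable [DecidableEq n]

lemma of_mulVec_eq_smul (hw : IsDiagonalForm 1 w 1) (hA : ∀ j, A *ᵥ w j = ρ j • w j) :
    IsDiagonalForm A w ρ := fun i j => by
  have := hw i j
  rw [one_mulVec] at this
  rw [hA, dotProduct_smul, this]
  split_ifs with hij <;> simp [hij]

variable [Fintype ι]

lemma linearIndependent (hw : IsDiagonalForm 1 w 1) : LinearIndependent ℝ w := by
  refine Fintype.linearIndependent_iff.mpr fun c hc i => ?_
  have hsq := hw.sum_smul_dotProduct_mulVec c
  simp only [hc, zero_dotProduct, Pi.one_apply, one_mul] at hsq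
  exact pow_eq_zero_iff two_ne_zero |>.mp <|
    (sum_eq_zero_iff_of_nonneg fun i _ => sq_nonneg (c i)).mp hsq.symm i (mem_univ i)

lemma dotProduct_mulVec_le_of_mem_span (hw : IsDiagonalForm 1 w 1) (hA : IsDiagonalForm A w ρ)
    {t : ℝ} (hρ : ∀ i, ρ i ≤ t) {x : n → ℝ} (hx : x ∈ Submodule.span ℝ (Set.range w)) :
    x ⬝ᵥ (A *ᵥ x) ≤ t * (x ⬝ᵥ x) := by
  obtain ⟨c, rfl⟩ := Submodule.mem_span_range_iff_exists_fun ℝ |>.mp hx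
  have hsq := hw.sum_smul_dotProduct_mulVec c
  rw [one_mulVec] at hsq
  rw [hA.sum_smul_dotProduct_mulVec, hsq, mul_sum]
  exact sum_le_sum fun i _ => by simp only [Pi.one_apply, one_mul]; gcongr; exact hρ i

lemma lt_dotProduct_mulVec_of_mem_span (hw : IsDiagonalForm 1 w 1) (hA : IsDiagonalForm A w ρ)
    {t : ℝ} (hρ : ∀ i, t < ρ i) {x : n → ℝ} (hx : x ∈ Submodule.span ℝ (Set.range w))
    (hx0 : x ≠ 0) : t * (x ⬝ᵥ x) < x ⬝ᵥ (A *ᵥ x) := by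
  obtain ⟨c, rfl⟩ := Submodule.mem_span_range_iff_exists_fun ℝ |>.mp hx
  obtain ⟨i₀, hi₀⟩ : ∃ i, c i ≠ 0 := by
    by_contra! hc
    simp [hc] at hx0
  have hsq := hw.sum_smul_dotProduct_mulVec c
  rw [one_mulVec] at hsq
  rw [hA.sum_smul_dotProduct_mulVec, hsq, mul_sum]
  refine sum_lt_sum (fun i _ => ?_) ⟨i₀, mem_univ _, ?_⟩
  · simp only [Pi.one_apply, one_mul]; gcongr; exact (hρ i).le
  · simp only [Pi.one_apply, one_mul]; gcongr; exact hρ i₀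

end IsDiagonalForm

variable [DecidableEq n] [Fintype ι] [Fintype κ]

/-- Min–max in counting form: the span of the `u k` with `μ k ≤ t` meets the span of the `z i`
with `t < ν i` only in `0`, and has codimension `#{k | t < μ k}` because `u` spans. -/
theorem card_lt_le_card_lt_of_isDiagonalForm {A : Matrix n n ℝ} {u : κ → n → ℝ} {μ : κ → ℝ}
    {z : ι → n → ℝ} {ν : ι → ℝ} (hu : IsDiagonalForm 1 u 1) (huA : IsDiagonalForm A u μ)
    (hκ : Fintype.card n ≤ Fintype.card κ) (hz : IsDiagonalForm 1 z 1)
    (hzA : IsDiagonalForm A z ν) (t : ℝ) : #{i | t < ν i} ≤ #{k | t < μ k} := by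
  let zHigh : {i // t < ν i} → n → ℝ := z ∘ Subtype.val
  let uLow : {k // ¬t < μ k} → n → ℝ := u ∘ Subtype.val
  have hdisj :
      Disjoint (Submodule.span ℝ (Set.range zHigh)) (Submodule.span ℝ (Set.range uLow)) := by
    refine Submodule.disjoint_def.mpr fun x hxz hxu => by_contra fun hx0 => ?_
    have hlt := (hz.comp Subtype.val_injective).lt_dotProduct_mulVec_of_mem_span
      (hzA.comp Subtype.val_injective) (fun i => i.2) hxz hx0
    have hle := (hu.comp Subtype.val_injective).dotProduct_mulVec_le_of_mem_span
      (huA.comp Subtype.val_injective) (fun k => not_lt.mp k.2) hxu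
    exact hlt.not_ge hle
  have hdim := Submodule.finrank_add_finrank_le_of_disjoint hdisj
  rw [finrank_span_eq_card (hz.comp Subtype.val_injective).linearIndependent,
    finrank_span_eq_card (hu.comp Subtype.val_injective).linearIndependent,
    Module.finrank_fintype_fun_eq_card, Fintype.card_subtype, Fintype.card_subtype] at hdim
  have hsplit := card_filter_add_card_filter_not (s := univ) (fun k => t < μ k)
  rw [card_univ] at hsplit
  omega

end DiagonalForm

section Hermitian

variable {n m : Type*} [Fintype n] [Fintype m]

lemma extend_dotProduct {f : m → n} (hf : Function.Injective f) (x : m → ℝ) (y : n → ℝ) :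
    Function.extend f x 0 ⬝ᵥ y = x ⬝ᵥ (y ∘ f) :=
  (Fintype.sum_of_injective f hf _ _
    (fun k hk => by simp [Function.extend_apply' _ _ _ hk])
    (fun i => by simp [hf.extend_apply])).symm

lemma extend_dotProduct_mulVec_extend (A : Matrix n n ℝ) {f : m → n} (hf : Function.Injective f)
    (x y : m → ℝ) :
    Function.extend f x 0 ⬝ᵥ (A *ᵥ Function.extend f y 0) = x ⬝ᵥ (A.submatrix f f *ᵥ y) := by
  rw [extend_dotProduct hf]
  congr 1
  ext i
  simp only [Function.comp_apply, mulVec, dotProduct_comm (A (f i)), extend_dotProduct hf]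
  exact dotProduct_comm _ _

lemma IsDiagonalForm.extend {ι : Type*} [DecidableEq ι] {A : Matrix n n ℝ} {f : m → n}
    (hf : Function.Injective f) {w : ι → m → ℝ} {ρ : ι → ℝ}
    (h : IsDiagonalForm (A.submatrix f f) w ρ) :
    IsDiagonalForm A (fun i => Function.extend f (w i) 0) ρ := fun i j => by
  rw [extend_dotProduct_mulVec_extend A hf]
  exact h i j

namespace Matrix.IsHermitian

variable [DecidableEq n] {A : Matrix n n ℝ} (hA : A.IsHermitian)

lemma isDiagonalForm_one_eigenvectorBasis :
    IsDiagonalForm 1 (fun j => ⇑(hA.eigenvectorBasis j)) 1 := fun i j => by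
  have := orthonormal_iff_ite.mp hA.eigenvectorBasis.orthonormal i j
  rw [EuclideanSpace.inner_eq_star_dotProduct, star_trivial, dotProduct_comm] at this
  simpa using this

lemma isDiagonalForm_eigenvectorBasis :
    IsDiagonalForm A (fun j => ⇑(hA.eigenvectorBasis j)) hA.eigenvalues :=
  hA.isDiagonalForm_one_eigenvectorBasis.of_mulVec_eq_smul hA.mulVec_eigenvectorBasis

lemma card_lt_eigenvalues₀ (t : ℝ) : #{i | t < hA.eigenvalues₀ i} = #{k | t < hA.eigenvalues k} :=
  card_equiv (Fintype.equivOfCardEq (Fintype.card_fin _)) fun i => by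
    unfold eigenvalues
    simp

variable [DecidableEq m] {B : Matrix m m ℝ}

theorem card_lt_eigenvalues_le_of_submatrix (hB : B.IsHermitian) {f : m → n}
    (hf : Function.Injective f) (hBA : A.submatrix f f = B) (t : ℝ) :
    #{j | t < hB.eigenvalues j} ≤ #{k | t < hA.eigenvalues k} := by
  subst hBA
  have hB_one := hB.isDiagonalForm_one_eigenvectorBasis
  rw [← submatrix_one f hf] at hB_one
  exact card_lt_le_card_lt_of_isDiagonalForm hA.isDiagonalForm_one_eigenvectorBasis
    hA.isDiagonalForm_eigenvectorBasis le_rfl (hB_one.extend hf)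
    (hB.isDiagonalForm_eigenvectorBasis.extend hf) t

/-- One half of Cauchy interlacing. -/
theorem eigenvalues₀_le_of_submatrix (hB : B.IsHermitian) {f : m → n}
    (hf : Function.Injective f) (hBA : A.submatrix f f = B) (i : Fin (Fintype.card m)) :
    hB.eigenvalues₀ i ≤ hA.eigenvalues₀ (Fin.castLE (Fintype.card_le_of_injective f hf) i) :=
  le_castLE_of_forall_card_lt_le hA.eigenvalues₀_antitone hB.eigenvalues₀_antitone _
    (fun t => by
      rw [card_lt_eigenvalues₀, card_lt_eigenvalues₀]
      exact hA.card_lt_eigenvalues_le_of_submatrix hB hf hBA t) i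

end Matrix.IsHermitian

end Hermitian

section Graph

variable [Fintype V] [DecidableEq V]

noncomputable def adjEigenvalues₀ (G : SimpleGraph V) : Fin (Fintype.card V) → ℝ :=
  letI := Classical.decRel G.Adj
  (adjMatrix_isHermitian G).eigenvalues₀

lemma adjEigenvalues₀_antitone (G : SimpleGraph V) : Antitone (adjEigenvalues₀ G) :=
  letI := Classical.decRel G.Adj
  (adjMatrix_isHermitian G).eigenvalues₀_antitone

lemma sPlus_eq_sum_adjEigenvalues₀ (G : SimpleGraph V) :
    sPlus G = ∑ i, posSq (adjEigenvalues₀ G i) :=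
  Equiv.sum_comp (Fintype.equivOfCardEq (Fintype.card_fin _)).symm
    fun i => posSq (adjEigenvalues₀ G i)

lemma maxEig_eq_adjEigenvalues₀_zero (G : SimpleGraph V) (hV : 0 < Fintype.card V) :
    maxEig G = adjEigenvalues₀ G ⟨0, hV⟩ := by
  have hsup : maxEig G = ⨆ i, adjEigenvalues₀ G i :=
    (Fintype.equivOfCardEq (Fintype.card_fin _)).symm.iSup_comp (g := adjEigenvalues₀ G)
  have : Nonempty (Fin (Fintype.card V)) := Fin.pos_iff_nonempty.mp hV
  rw [hsup]
  exact le_antisymm (ciSup_le fun i => adjEigenvalues₀_antitone G (Nat.zero_le i))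
    (le_ciSup (Set.finite_range _).bddAbove _)

theorem adjEigenvalues₀_le_of_embedding {W : Type*} [Fintype W] [DecidableEq W]
    {G : SimpleGraph V} {H : SimpleGraph W} (φ : H ↪g G) (i : Fin (Fintype.card W)) :
    adjEigenvalues₀ H i ≤
      adjEigenvalues₀ G (Fin.castLE (Fintype.card_le_of_injective φ φ.injective) i) :=
  letI := Classical.decRel G.Adj
  letI := Classical.decRel H.Adj
  (adjMatrix_isHermitian G).eigenvalues₀_le_of_submatrix (adjMatrix_isHermitian H) φ.injective
    (φ.submatrix_adjMatrix ℝ) i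

end Graph

/-- For a graph `G` on `n ≥ 2` vertices and a vertex `v`,
`s⁺(G) ≥ λ₁(G)² + s⁺(G−v) − λ₁(G−v)²`. -/
theorem sPlus_ge_vertex_deleted {V : Type*} [Fintype V] [DecidableEq V]
    (G : SimpleGraph V) (hn : 2 ≤ Fintype.card V) (v : V) :
    sPlus G ≥ (maxEig G) ^ 2 + sPlus (G.induce (↑({v}ᶜ : Finset V) : Set V))
      - (maxEig (G.induce (↑({v}ᶜ : Finset V) : Set V))) ^ 2 := by
  obtain ⟨w, hwv⟩ := Fintype.exists_ne_of_one_lt_card hn v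
  have hW : 0 < Fintype.card ↥(↑({v}ᶜ : Finset V) : Set V) :=
    Fintype.card_pos_iff.mpr ⟨⟨w, by simpa using hwv⟩⟩
  rw [ge_iff_le, sPlus_eq_sum_adjEigenvalues₀, sPlus_eq_sum_adjEigenvalues₀,
    maxEig_eq_adjEigenvalues₀_zero G (by omega), maxEig_eq_adjEigenvalues₀_zero _ hW]
  exact sq_add_sum_posSq_sub_sq_le (Fin.castLE_injective _)
    (adjEigenvalues₀_le_of_embedding (SimpleGraph.Embedding.induce _)) ⟨0, hW⟩
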